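/- Let K_4 have vertices v_1, v_2, v_3, v_4 with list sizes f(v_1) = 3, f(v_2) = f(v_3) = 6, f(v_4) = 9, and let m = 72. Then the join G = K_4 ⊕ K̄_{72}, where each of the 72 independent vertices has list size 4, is not f^(72)-choosable, but for every m' < 72, K_4 ⊕ K̄_{m'} (with each independent vertex having list size 4) is f^(m')-choosable. -/

import Mathlib

/-!
An independent vertex with a list of `n` colours can be coloured unless its list is exactly the
colour set of the colouring of `K_n`. Hence `K_n ⊕ K̄_m` is `f`-choosable iff every `f`-list
assignment `L` of `K_n` has more than `m` transversals (colour sets of proper `L`-colourings of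
`K_n`): otherwise the `m` independent vertices can be given all of them as lists.
UV-compressions `y ↦ x` with `x < y` applied to all lists never increase the number of
transversals and decrease the total sum of the lists, so this number is smallest when every list
is an initial segment of `ℕ`; for sizes `3, 6, 6, 9` it is then `72`.
-/

/-- A graph `G` with list sizes `f` is `f`-choosable if every list assignment with the
prescribed list sizes admits a proper colouring from the lists. -/
def Choosable {V : Type*} (G : SimpleGraph V) (f : V → ℕ) : Prop :=
  ∀ L : V → Finset ℕ, (∀ v, (L v).card = f v) →
    ∃ c : V → ℕ, (∀ v, c v ∈ L v) ∧ ∀ ⦃u v⦄, G.Adj u v → c u ≠ c v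

/-- The join `G ⊕ K̄_m` of a graph `G` with the edgeless graph on `m` vertices. -/
def joinK {V : Type*} (G : SimpleGraph V) (m : ℕ) : SimpleGraph (V ⊕ Fin m) where
  Adj a b :=
    match a, b with
    | Sum.inl u, Sum.inl v => G.Adj u v
    | Sum.inl _, Sum.inr _ => True
    | Sum.inr _, Sum.inl _ => True
    | Sum.inr _, Sum.inr _ => False
  symm := by
    refine ⟨?_⟩
    rintro (u | i) (v | j) h
    · exact G.adj_symm h
    · trivial
    · trivial
    · exact h
  loopless := by
    refine ⟨?_⟩
    rintro (u | i) h
    · exact G.irrefl h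
    · exact h

open Finset Function UV FinsetFamily

section Transversals

variable {ι α : Type*} [Fintype ι] [DecidableEq ι] [DecidableEq α]

def transversals (L : ι → Finset α) : Finset (Finset α) :=
  {f ∈ Fintype.piFinset L | Injective f}.image fun f => univ.image f

variable {L : ι → Finset α} {T : Finset α}

theorem mem_transversals :
    T ∈ transversals L ↔ ∃ f : ι → α, Injective f ∧ (∀ i, f i ∈ L i) ∧ univ.image f = T := by
  simp only [transversals, mem_image, mem_filter, Fintype.mem_piFinset]
  exact exists_congr fun f => by tauto

theorem card_of_mem_transversals (hT : T ∈ transversals L) : #T = Fintype.card ι := by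
  obtain ⟨f, hf, -, rfl⟩ := mem_transversals.1 hT
  exact card_image_of_injective _ hf

theorem insert_erase_mem_transversals {f : ι → α} (hf : Injective f) {j : ι} {z : α}
    (hz : ∀ i, f i ≠ z) (hzj : z ∈ L j) (hfL : ∀ i ≠ j, f i ∈ L i) :
    insert z ((univ.image f).erase (f j)) ∈ transversals L := by
  refine mem_transversals.2 ⟨update f j z, ?_, fun i => ?_, ?_⟩
  · intro a b hab
    by_cases ha : a = j <;> by_cases hb : b = j <;> simp_all [hf.eq_iff]
  · by_cases hi : i = j <;> simp_all
  · ext t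
    simp only [mem_image, mem_univ, true_and, mem_insert, mem_erase]
    constructor
    · rintro ⟨i, rfl⟩
      by_cases hi : i = j
      · simp [hi]
      · simp [hi, hf.ne hi]
    · rintro (rfl | ⟨htj, i, rfl⟩)
      · exact ⟨j, update_self _ _ _⟩
      · exact ⟨i, update_of_ne (fun hij => htj (congrArg f hij)) _ _⟩

end Transversals

section Compression

variable {α : Type*} [DecidableEq α] {x y t : α} {S : Finset α}

theorem eq_and_mem_of_mem_compress (ht : t ∈ compress {x} {y} S) (htS : t ∉ S) :
    t = x ∧ y ∈ S := by
  unfold compress at ht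
  split_ifs at ht with h
  · simp_all
  · exact absurd ht htS

theorem mem_and_mem_of_right_mem_compress (hy : y ∈ compress {x} {y} S) :
    x ∈ S ∧ y ∈ S := by
  unfold compress at hy
  split_ifs at hy with h
  · simp at hy
  · simp_all

theorem mem_of_mem_compress_of_ne (ht : t ∈ compress {x} {y} S) (htx : t ≠ x) : t ∈ S := by
  by_contra htS
  exact htx (eq_and_mem_of_mem_compress ht htS).1

theorem compress_singleton_of_mem_of_notMem (hxy : x ≠ y) (hx : x ∉ S) (hy : y ∈ S) :
    compress {x} {y} S = insert x (S.erase y) := by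
  rw [compress_of_disjoint_of_le (by simpa) (by simpa)]
  ext t
  simp only [sup_eq_union, mem_sdiff, mem_union, mem_singleton, mem_insert, mem_erase]
  constructor
  · rintro ⟨h | rfl, hty⟩ <;> tauto
  · rintro (rfl | ⟨hty, ht⟩) <;> tauto

end Compression

section Shifting

variable {ι α : Type*} [Fintype ι] [DecidableEq ι] [DecidableEq α]
  {L : ι → Finset α} {T : Finset α} {x y : α}

theorem compress_mem_transversals (hxy : x ≠ y)
    (hT : T ∈ transversals fun i => compress {x} {y} (L i)) (hyT : y ∈ T) (hxT : x ∉ T) :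
    compress {x} {y} T ∈ transversals L := by
  obtain ⟨f, hf, hfC, rfl⟩ := mem_transversals.1 hT
  obtain ⟨j, -, hfj⟩ := mem_image.1 hyT
  have hfx : ∀ i, f i ≠ x := fun i h => hxT (mem_image.2 ⟨i, mem_univ _, h⟩)
  have hxj : x ∈ L j := (mem_and_mem_of_right_mem_compress (hfj ▸ hfC j)).1
  rw [compress_singleton_of_mem_of_notMem hxy hxT hyT, ← hfj]
  exact insert_erase_mem_transversals hf hfx hxj
    fun i _ => mem_of_mem_compress_of_ne (hfC i) (hfx i)

theorem exists_compress_eq_of_notMem_transversals (hxy : x ≠ y)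
    (hT : T ∈ transversals fun i => compress {x} {y} (L i)) (hTL : T ∉ transversals L) :
    ∃ b ∈ transversals L, compress {x} {y} b = T := by
  obtain ⟨f, hf, hfC, rfl⟩ := mem_transversals.1 hT
  obtain ⟨i₀, hi₀⟩ : ∃ i, f i ∉ L i := by
    by_contra! h
    exact hTL (mem_transversals.2 ⟨f, hf, h, rfl⟩)
  obtain ⟨hfi₀, hyi₀⟩ := eq_and_mem_of_mem_compress (hfC i₀) hi₀
  have hfL : ∀ i ≠ i₀, f i ∈ L i := fun i hi =>
    mem_of_mem_compress_of_ne (hfC i) (hfi₀ ▸ hf.ne hi)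
  by_cases hy : ∃ j, f j = y
  · -- swapping the colours of `i₀` and `j` gives a transversal of `L` with the same image
    obtain ⟨j, hfj⟩ := hy
    have hxj : x ∈ L j := (mem_and_mem_of_right_mem_compress (hfj ▸ hfC j)).1
    refine absurd (mem_transversals.2 ⟨f ∘ Equiv.swap i₀ j, hf.comp (Equiv.injective _),
      fun i => ?_, by rw [← image_image, image_univ_equiv]⟩) hTL
    by_cases hi : i = i₀
    · simpa [hi, hfj] using hyi₀
    by_cases hj : i = j
    · simpa [hj, hfi₀] using hxj
    simpa [Equiv.swap_apply_of_ne_of_ne hi hj] using hfL i hi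
  · push Not at hy
    have hxT : x ∈ univ.image f := mem_image.2 ⟨i₀, mem_univ _, hfi₀⟩
    refine ⟨_, insert_erase_mem_transversals hf hy hyi₀ hfL, ?_⟩
    rw [hfi₀, compress_singleton_of_mem_of_notMem hxy (by simp [hxy]) (mem_insert_self _ _),
      erase_insert (by simp [hy]), insert_erase hxT]

theorem transversals_compress_subset_compression (hxy : x ≠ y) :
    (transversals fun i => compress {x} {y} (L i)) ⊆ 𝓒 {x} {y} (transversals L) := by
  intro T hT
  rw [mem_compression]
  by_cases hTL : T ∈ transversals L
  · refine Or.inl ⟨hTL, ?_⟩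
    by_cases h : y ∈ T ∧ x ∉ T
    · exact compress_mem_transversals hxy hT h.1 h.2
    · rwa [compress, if_neg (by simpa [and_comm] using h)]
  · exact Or.inr ⟨hTL, exists_compress_eq_of_notMem_transversals hxy hT hTL⟩

end Shifting

section Potential

variable {x y : ℕ} {S : Finset ℕ}

theorem sum_compress_add (hxy : x ≠ y) (hx : x ∉ S) (hy : y ∈ S) :
    ∑ a ∈ compress {x} {y} S, a + y = ∑ a ∈ S, a + x := by
  rw [compress_singleton_of_mem_of_notMem hxy hx hy,
    sum_insert (fun h => hx (mem_of_mem_erase h)), add_assoc, sum_erase_add _ _ hy, add_comm]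

theorem sum_compress_le (hxy : x < y) (S : Finset ℕ) :
    ∑ a ∈ compress {x} {y} S, a ≤ ∑ a ∈ S, a := by
  by_cases h : x ∉ S ∧ y ∈ S
  · have := sum_compress_add hxy.ne h.1 h.2
    omega
  · rw [compress, if_neg (by simpa using h)]

theorem sum_compress_lt (hxy : x < y) (hx : x ∉ S) (hy : y ∈ S) :
    ∑ a ∈ compress {x} {y} S, a < ∑ a ∈ S, a := by
  have := sum_compress_add hxy.ne hx hy
  omega

theorem exists_lt_notMem_mem_of_ne_range (hS : S ≠ range #S) :
    ∃ x y, x < y ∧ x ∉ S ∧ y ∈ S := by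
  by_contra! hdown
  refine hS (eq_of_subset_of_card_le (fun y hy => mem_range.2 ?_) (card_range _).le)
  by_contra! hyS
  have : range (y + 1) ⊆ S := fun x hx =>
    (Nat.lt_succ_iff.1 (mem_range.1 hx)).eq_or_lt.elim (· ▸ hy)
      fun hlt => by_contra (hdown x y hlt · hy)
  have := card_le_card this
  simp only [card_range] at this
  omega

end Potential

theorem card_transversals_range_le {ι : Type*} [Fintype ι] [DecidableEq ι]
    (L : ι → Finset ℕ) : #(transversals fun i => range #(L i)) ≤ #(transversals L) := by
  induction h : ∑ i, ∑ a ∈ L i, a using Nat.strong_induction_on generalizing L with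
  | _ n ih =>
  by_cases hL : ∀ i, L i = range #(L i)
  · rw [← funext hL]
  push Not at hL
  obtain ⟨i, hi⟩ := hL
  obtain ⟨x, y, hxy, hx, hy⟩ := exists_lt_notMem_mem_of_ne_range hi
  have hcard : ∀ i, #(compress {x} {y} (L i)) = #(L i) := fun i => card_compress (by simp) _
  have hsum : ∑ i, ∑ a ∈ compress {x} {y} (L i), a < n := h ▸
    sum_lt_sum (fun i _ => sum_compress_le hxy (L i)) ⟨i, mem_univ _, sum_compress_lt hxy hx hy⟩
  calc #(transversals fun i => range #(L i))
      = #(transversals fun i => range #(compress {x} {y} (L i))) := by simp only [hcard]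
    _ ≤ #(transversals fun i => compress {x} {y} (L i)) := ih _ hsum _ rfl
    _ ≤ #(𝓒 {x} {y} (transversals L)) :=
        card_le_card (transversals_compress_subset_compression hxy.ne)
    _ = #(transversals L) := card_compression _ _ _

section Join

variable {ι : Type*} [Fintype ι] [DecidableEq ι] {f : ι → ℕ} {m : ℕ}

theorem lt_card_transversals_of_choosable_joinK
    (hch : Choosable (joinK (SimpleGraph.completeGraph ι) m) (Sum.elim f fun _ => Fintype.card ι))
    (L : ι → Finset ℕ) (hL : ∀ i, #(L i) = f i) : m < #(transversals L) := by
  by_contra! hle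
  let M : Fin m → Finset ℕ := fun j => (transversals L).toList.getD j (range (Fintype.card ι))
  have hM : ∀ j, #(M j) = Fintype.card ι := by
    intro j
    dsimp only [M]
    by_cases hj : (j : ℕ) < (transversals L).toList.length
    · rw [List.getD_eq_getElem _ _ hj]
      exact card_of_mem_transversals (mem_toList.1 (List.getElem_mem hj))
    · rw [List.getD_eq_default _ _ (not_lt.1 hj), card_range]
  obtain ⟨c, hc, hproper⟩ := hch (Sum.elim L M) (by rintro (i | j) <;> simp [hL, hM])
  have hinj : Injective (c ∘ Sum.inl) := fun u v huv =>
    by_contra fun hne => hproper (u := Sum.inl u) (v := Sum.inl v) hne huv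
  have hT : univ.image (c ∘ Sum.inl) ∈ (transversals L).toList :=
    mem_toList.2 (mem_transversals.2 ⟨_, hinj, fun i => hc (Sum.inl i), rfl⟩)
  obtain ⟨k, hk, hkT⟩ := List.getElem_of_mem hT
  have hkm : k < m := (length_toList _ ▸ hk).trans_le hle
  have hcol := hc (Sum.inr ⟨k, hkm⟩)
  simp only [Sum.elim_inr, M, List.getD_eq_getElem _ _ hk, hkT, mem_image, mem_univ,
    true_and] at hcol
  obtain ⟨i, hi⟩ := hcol
  exact hproper (u := Sum.inl i) (v := Sum.inr ⟨k, hkm⟩) trivial hi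

theorem choosable_joinK_of_lt_card_transversals
    (h : ∀ L : ι → Finset ℕ, (∀ i, #(L i) = f i) → m < #(transversals L)) :
    Choosable (joinK (SimpleGraph.completeGraph ι) m) (Sum.elim f fun _ => Fintype.card ι) := by
  intro L hL
  obtain ⟨T, hT, hTM⟩ := exists_mem_notMem_of_card_lt_card
    ((card_image_le.trans_lt (by simpa using h _ fun i => hL (Sum.inl i))) :
      #(univ.image fun j => L (Sum.inr j)) < #(transversals fun i => L (Sum.inl i)))
  obtain ⟨c, hc, hcL, rfl⟩ := mem_transversals.1 hT
  have hfree : ∀ j, ∃ a ∈ L (Sum.inr j), a ∉ univ.image c := fun j => not_subset.1 fun hsub =>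
    hTM (mem_image.2 ⟨j, mem_univ _, eq_of_subset_of_card_le hsub
      (by rw [card_image_of_injective _ hc, hL]; rfl)⟩)
  choose d hdL hdc using hfree
  refine ⟨Sum.elim c d, by rintro (i | j) <;> simp [hcL, hdL], ?_⟩
  rintro (u | j) (v | k) hadj
  · exact hc.ne hadj
  · exact fun h => hdc k (mem_image.2 ⟨u, mem_univ _, h⟩)
  · exact fun h => hdc j (mem_image.2 ⟨v, mem_univ _, h.symm⟩)
  · exact hadj.elim

end Join

theorem card_transversals_range_3_6_6_9 :
    #(transversals ![range 3, range 6, range 6, range 9]) = 72 := by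
  decide +kernel

/-- With list sizes `(3, 6, 6, 9)` on `K_4` and `4` on each independent vertex, the join
`K_4 ⊕ K̄_72` is not choosable, while `K_4 ⊕ K̄_{m'}` is choosable for every `m' < 72`. -/
theorem stmt_19 :
    ¬ Choosable (joinK (SimpleGraph.completeGraph (Fin 4)) 72)
        (Sum.elim (![3, 6, 6, 9] : Fin 4 → ℕ) fun _ => 4) ∧
      ∀ m', m' < 72 →
        Choosable (joinK (SimpleGraph.completeGraph (Fin 4)) m')
          (Sum.elim (![3, 6, 6, 9] : Fin 4 → ℕ) fun _ => 4) := by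
  refine ⟨fun hch => ?_, fun m' hm' => choosable_joinK_of_lt_card_transversals fun L hL => ?_⟩
  · have := lt_card_transversals_of_choosable_joinK hch ![range 3, range 6, range 6, range 9]
      (by decide)
    exact (card_transversals_range_3_6_6_9 ▸ this).false
  · have hrange : (fun i => range #(L i)) = ![range 3, range 6, range 6, range 9] := by
      ext1 i; fin_cases i <;> simp [hL]
    calc m' < 72 := hm'
      _ = #(transversals fun i => range #(L i)) := by rw [hrange, card_transversals_range_3_6_6_9]
      _ ≤ #(transversals L) := card_transversals_range_le L
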